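/- Suppose A_3 and A_4 are symmetric 4v×4v matrices satisfying A_3² = A_4² = k A_0 + c A_2 and A_3A_4 = A_4A_3 = k A_1 + c A_2, where A_0 = I_{4v}, A_1 = diag(P⊗I_v, P⊗I_v), A_2 = diag(J_2⊗(J_v−I_v), J_2⊗(J_v−I_v)), and c = k(k−1)/(2(v−1)). If A_3 = antidiag([[W_1, W_2],[W_2, W_1]]) and A_4 = antidiag([[W_2, W_1],[W_1, W_2]]) in the block form of the paper for some v×v (0,1)-matrices W_1, W_2, then (W_1 − W_2)(W_1 − W_2)ᵀ = k I_v and (W_1 + W_2)(W_1 + W_2)ᵀ = (k − λ) I_v + λ J_v with λ = k(k−1)/(v−1). -/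

import Mathlib

/-!
In the top-left `2v × 2v` block, `A₃²` equals `X Xᵀ` with `X = I ⊗ W₁ + P ⊗ W₂`. Since `P² = I`,
matrices of the form `I ⊗ S + P ⊗ T` multiply like elements of the group algebra of `ℤ/2`, so
`X Xᵀ = I ⊗ (W₁W₁ᵀ + W₂W₂ᵀ) + P ⊗ (W₁W₂ᵀ + W₂W₁ᵀ)`, while `J₂ = I + P` puts `k A₀ + c A₂` in the
same form. Comparing the `I`- and `P`-components gives `W₁W₁ᵀ + W₂W₂ᵀ = k I + c (J − I)` and
`W₁W₂ᵀ + W₂W₁ᵀ = c (J − I)`; their difference and sum are the two claimed identities.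
-/

open Matrix Kronecker

namespace BGWScheme

def P : Matrix (Fin 2) (Fin 2) ℚ := !![0, 1; 1, 0]

def J2 : Matrix (Fin 2) (Fin 2) ℚ := Matrix.of fun _ _ => 1

def Jv (v : ℕ) : Matrix (Fin v) (Fin v) ℚ := Matrix.of fun _ _ => 1

/-- Index set for the `4v × 4v` matrices of the scheme. -/
abbrev Idx (v : ℕ) := (Fin 2 × Fin v) ⊕ (Fin 2 × Fin v)

def A0 (v : ℕ) : Matrix (Idx v) (Idx v) ℚ := 1

def A1 (v : ℕ) : Matrix (Idx v) (Idx v) ℚ :=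
  Matrix.fromBlocks (P ⊗ₖ (1 : Matrix (Fin v) (Fin v) ℚ)) 0 0
    (P ⊗ₖ (1 : Matrix (Fin v) (Fin v) ℚ))

def A2 (v : ℕ) : Matrix (Idx v) (Idx v) ℚ :=
  Matrix.fromBlocks (J2 ⊗ₖ (Jv v - 1)) 0 0 (J2 ⊗ₖ (Jv v - 1))

def A3 (v : ℕ) (W1 W2 : Matrix (Fin v) (Fin v) ℚ) : Matrix (Idx v) (Idx v) ℚ :=
  Matrix.fromBlocks 0 ((1 : Matrix (Fin 2) (Fin 2) ℚ) ⊗ₖ W1 + P ⊗ₖ W2)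
    ((1 : Matrix (Fin 2) (Fin 2) ℚ) ⊗ₖ W1ᵀ + P ⊗ₖ W2ᵀ) 0

def A4 (v : ℕ) (W1 W2 : Matrix (Fin v) (Fin v) ℚ) : Matrix (Idx v) (Idx v) ℚ :=
  Matrix.fromBlocks 0 ((1 : Matrix (Fin 2) (Fin 2) ℚ) ⊗ₖ W2 + P ⊗ₖ W1)
    ((1 : Matrix (Fin 2) (Fin 2) ℚ) ⊗ₖ W2ᵀ + P ⊗ₖ W1ᵀ) 0

def A5 (v : ℕ) (W1 W2 : Matrix (Fin v) (Fin v) ℚ) : Matrix (Idx v) (Idx v) ℚ :=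
  Matrix.fromBlocks 0 (J2 ⊗ₖ (Jv v - W1 - W2)) (J2 ⊗ₖ (Jv v - W1ᵀ - W2ᵀ)) 0

lemma P_mul_P : P * P = 1 := by
  ext i j
  fin_cases i <;> fin_cases j <;> simp [P, mul_apply, Fin.sum_univ_two]

lemma J2_eq_one_add_P : J2 = 1 + P := by
  ext i j
  fin_cases i <;> fin_cases j <;> simp [J2, P]

section Kronecker

variable {n : Type*}

lemma one_kronecker_add_P_kronecker_inj {S T S' T' : Matrix n n ℚ} :
    (1 : Matrix (Fin 2) (Fin 2) ℚ) ⊗ₖ S + P ⊗ₖ T = (1 : Matrix (Fin 2) (Fin 2) ℚ) ⊗ₖ S' + P ⊗ₖ T'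
      ↔ S = S' ∧ T = T' := by
  refine ⟨fun h => ⟨?_, ?_⟩, fun ⟨hS, hT⟩ => hS ▸ hT ▸ rfl⟩ <;> ext i j
  · simpa [P, one_apply] using congrFun (congrFun h (0, i)) (0, j)
  · simpa [P, one_apply] using congrFun (congrFun h (0, i)) (1, j)

lemma one_kronecker_add_P_kronecker_mul [Fintype n] (A B C D : Matrix n n ℚ) :
    ((1 : Matrix (Fin 2) (Fin 2) ℚ) ⊗ₖ A + P ⊗ₖ B) * ((1 : Matrix (Fin 2) (Fin 2) ℚ) ⊗ₖ C + P ⊗ₖ D)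
      = (1 : Matrix (Fin 2) (Fin 2) ℚ) ⊗ₖ (A * C + B * D) + P ⊗ₖ (A * D + B * C) := by
  simp only [add_mul, mul_add, ← mul_kronecker_mul, P_mul_P, one_mul, mul_one, kronecker_add]
  abel

end Kronecker

lemma toBlocks₁₁_A3_mul_self (v : ℕ) (W1 W2 : Matrix (Fin v) (Fin v) ℚ) :
    (A3 v W1 W2 * A3 v W1 W2).toBlocks₁₁
      = (1 : Matrix (Fin 2) (Fin 2) ℚ) ⊗ₖ (W1 * W1ᵀ + W2 * W2ᵀ) + P ⊗ₖ (W1 * W2ᵀ + W2 * W1ᵀ) := by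
  rw [A3, fromBlocks_multiply, toBlocks_fromBlocks₁₁, zero_mul, zero_add,
    one_kronecker_add_P_kronecker_mul]

lemma toBlocks₁₁_smul_A0_add_smul_A2 (v : ℕ) (a b : ℚ) :
    (a • A0 v + b • A2 v).toBlocks₁₁
      = (1 : Matrix (Fin 2) (Fin 2) ℚ) ⊗ₖ (a • 1 + b • (Jv v - 1)) + P ⊗ₖ (b • (Jv v - 1)) := by
  rw [A0, A2, ← fromBlocks_one, fromBlocks_smul, fromBlocks_smul, fromBlocks_add,
    toBlocks_fromBlocks₁₁, J2_eq_one_add_P, ← one_kronecker_one]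
  simp only [add_kronecker, kronecker_add, kronecker_smul, smul_add, add_assoc]

section Transpose

variable {n R : Type*} [Fintype n] [CommRing R]

lemma sub_mul_transpose_sub (A B : Matrix n n R) :
    (A - B) * (A - B)ᵀ = (A * Aᵀ + B * Bᵀ) - (A * Bᵀ + B * Aᵀ) := by
  rw [transpose_sub]
  noncomm_ring

lemma add_mul_transpose_add (A B : Matrix n n R) :
    (A + B) * (A + B)ᵀ = (A * Aᵀ + B * Bᵀ) + (A * Bᵀ + B * Aᵀ) := by
  rw [transpose_add]
  noncomm_ring

end Transpose

theorem scheme_to_balanced_weighing_general (v : ℕ) (k : ℚ)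
    (W1 W2 : Matrix (Fin v) (Fin v) ℚ)
    (h33 : A3 v W1 W2 * A3 v W1 W2
      = k • A0 v + (k * (k - 1) / (2 * ((v : ℚ) - 1))) • A2 v) :
    (W1 - W2) * (W1 - W2)ᵀ = k • (1 : Matrix (Fin v) (Fin v) ℚ) ∧
    (W1 + W2) * (W1 + W2)ᵀ
      = (k - k * (k - 1) / ((v : ℚ) - 1)) • (1 : Matrix (Fin v) (Fin v) ℚ)
        + (k * (k - 1) / ((v : ℚ) - 1)) • Jv v := by
  set c : ℚ := k * (k - 1) / (2 * ((v : ℚ) - 1)) with hc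
  have hblock := congrArg toBlocks₁₁ h33
  rw [toBlocks₁₁_A3_mul_self, toBlocks₁₁_smul_A0_add_smul_A2] at hblock
  obtain ⟨hdiag, hoff⟩ := one_kronecker_add_P_kronecker_inj.1 hblock
  have h2c : k * (k - 1) / ((v : ℚ) - 1) = 2 * c := by
    rw [hc, mul_div_assoc', mul_div_mul_left _ _ two_ne_zero]
  rw [sub_mul_transpose_sub, add_mul_transpose_add, hdiag, hoff, h2c]
  constructor
  · abel
  · module

/-- Conversely, if the block matrices `A₃`, `A₄` built from `(0,1)`-matrices
`W₁, W₂` satisfy `A₃² = A₄² = k A₀ + c A₂` and `A₃A₄ = A₄A₃ = k A₁ + c A₂`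
with `c = k(k−1)/(2(v−1))`, then `(W₁−W₂)(W₁−W₂)ᵀ = k I` and
`(W₁+W₂)(W₁+W₂)ᵀ = (k−λ) I + λ J` with `λ = k(k−1)/(v−1)`. -/
theorem scheme_to_balanced_weighing (v : ℕ) (hv : 1 < v) (k : ℚ)
    (W1 W2 : Matrix (Fin v) (Fin v) ℚ)
    (h01a : ∀ x y, W1 x y = 0 ∨ W1 x y = 1)
    (h01b : ∀ x y, W2 x y = 0 ∨ W2 x y = 1)
    (h33 : A3 v W1 W2 * A3 v W1 W2
      = k • A0 v + (k * (k - 1) / (2 * ((v : ℚ) - 1))) • A2 v)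
    (h44 : A4 v W1 W2 * A4 v W1 W2
      = k • A0 v + (k * (k - 1) / (2 * ((v : ℚ) - 1))) • A2 v)
    (h34 : A3 v W1 W2 * A4 v W1 W2
      = k • A1 v + (k * (k - 1) / (2 * ((v : ℚ) - 1))) • A2 v)
    (h43 : A4 v W1 W2 * A3 v W1 W2
      = k • A1 v + (k * (k - 1) / (2 * ((v : ℚ) - 1))) • A2 v) :
    (W1 - W2) * (W1 - W2)ᵀ = k • (1 : Matrix (Fin v) (Fin v) ℚ) ∧
    (W1 + W2) * (W1 + W2)ᵀ
      = (k - k * (k - 1) / ((v : ℚ) - 1)) • (1 : Matrix (Fin v) (Fin v) ℚ)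
        + (k * (k - 1) / ((v : ℚ) - 1)) • Jv v :=
  scheme_to_balanced_weighing_general v k W1 W2 h33

end BGWScheme
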